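/- Let A be an arrangement of d lines with t_d = t_{d−1} = 0. Then (d−2)·c̄₁² − (2d−6)·c̄₂ ≥ 0, i.e., c̄₁²/c̄₂ ≥ (2d−6)/(d−2), with equality if and only if t_2 = d(d−1)/2 (the arrangement has only nodes). -/

import Mathlib

open scoped BigOperators

/-- Points and lines of the projective plane over `k` (lines via duality). -/
abbrev ProjPlane (k : Type*) [Field k] := Projectivization k (Fin 3 → k)

/-- Incidence between a point `p` and a line `L` (given by its dual coefficients):
all representatives pair to zero under the standard bilinear form. -/
def Incid {k : Type*} [Field k] (p L : ProjPlane k) : Prop :=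
  ∀ v ∈ p.submodule, ∀ w ∈ L.submodule, ∑ i, v i * w i = 0

/-- Number of lines of the arrangement `A` passing through the point `p`. -/
noncomputable def linesThrough {k : Type*} [Field k]
    (A : Finset (ProjPlane k)) (p : ProjPlane k) : ℕ :=
  {L : ProjPlane k | L ∈ A ∧ Incid p L}.ncard

/-- `tm A m` is the number of `m`-points of the arrangement `A`. -/
noncomputable def tm {k : Type*} [Field k]
    (A : Finset (ProjPlane k)) (m : ℕ) : ℕ :=
  {p : ProjPlane k | linesThrough A p = m}.ncard

/-- The arrangement is trivial if all its lines pass through a common point. -/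
def IsTrivial {k : Type*} [Field k] (A : Finset (ProjPlane k)) : Prop :=
  ∃ p : ProjPlane k, ∀ L ∈ A, Incid p L

/-- First Chern number of a line arrangement. -/
noncomputable def c1sq {k : Type*} [Field k] (A : Finset (ProjPlane k)) : ℤ :=
  9 - 5 * (A.card : ℤ) +
    ∑ m ∈ Finset.Icc 2 A.card, (3 * (m : ℤ) - 4) * (tm A m : ℤ)

/-- Second Chern number of a line arrangement. -/
noncomputable def c2 {k : Type*} [Field k] (A : Finset (ProjPlane k)) : ℤ :=
  3 - 2 * (A.card : ℤ) +
    ∑ m ∈ Finset.Icc 2 A.card, ((m : ℤ) - 1) * (tm A m : ℤ)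

/-!
Two distinct lines of the projective plane meet in exactly one point (given by their cross
product), so counting ordered pairs of distinct lines by their intersection point gives
`d(d - 1) = ∑ m(m - 1) t_m`. Using this to cancel the constant term turns
`(d - 2) c̄₁² - (2d - 6) c̄₂` into `∑ (m - 2)(d - 1 - m) t_m`, whose coefficients vanish at `m = 2`
and `m = d - 1`, are positive for `3 ≤ m ≤ d - 2` and negative only at `m = d`. Since
`t_d = t_{d-1} = 0`, the sum is nonnegative and vanishes iff there is no point of multiplicity
`≥ 3`, which by the same count means `t_2 = d(d - 1)/2`.
-/

open Finset Projectivization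

section Geometry

variable {k : Type*} [Field k]

theorem incid_iff_orthogonal (p L : ProjPlane k) : Incid p L ↔ p.orthogonal L := by
  induction p using Projectivization.ind with | h v hv =>
  induction L using Projectivization.ind with | h w hw =>
  rw [orthogonal_mk]
  refine ⟨fun h => h v (by simp [submodule_mk]) w (by simp [submodule_mk]), ?_⟩
  intro h x hx y hy
  rw [submodule_mk, Submodule.mem_span_singleton] at hx hy
  obtain ⟨a, rfl⟩ := hx
  obtain ⟨b, rfl⟩ := hy
  simpa [dotProduct, mul_sum, mul_mul_mul_comm] using congrArg (a * b * ·) h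

theorem eq_cross_of_orthogonal [DecidableEq k] {p L₁ L₂ : ProjPlane k} (h : L₁ ≠ L₂)
    (h₁ : p.orthogonal L₁) (h₂ : p.orthogonal L₂) : p = cross L₁ L₂ := by
  induction p using Projectivization.ind with | h v hv =>
  induction L₁ using Projectivization.ind with | h w₁ hw₁ =>
  induction L₂ using Projectivization.ind with | h w₂ hw₂ =>
  rw [orthogonal_mk] at h₁ h₂
  rw [cross_mk_of_ne hw₁ hw₂ h, mk_eq_mk_iff_crossProduct_eq_zero, ← cross_anticomm,
    cross_cross_eq_smul_sub_smul, dotProduct_comm w₁, dotProduct_comm w₂, h₁, h₂]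
  simp

theorem existsUnique_incid_of_ne {L₁ L₂ : ProjPlane k} (h : L₁ ≠ L₂) :
    ∃! p, Incid p L₁ ∧ Incid p L₂ := by
  classical
  simp only [incid_iff_orthogonal]
  exact ⟨cross L₁ L₂, ⟨cross_orthogonal_left h, cross_orthogonal_right h⟩,
    fun p hp => eq_cross_of_orthogonal h hp.1 hp.2⟩

end Geometry

section DoubleCounting

variable {P L : Type*} (I : P → L → Prop) [∀ p, DecidablePred (I p)] (A : Finset L)

theorem finite_setOf_two_le_card_filter
    (hA : ∀ L₁ ∈ A, ∀ L₂ ∈ A, L₁ ≠ L₂ → {p | I p L₁ ∧ I p L₂}.Subsingleton) :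
    {p | 2 ≤ #(A.filter (I p))}.Finite := by
  refine (A.offDiag.finite_toSet.biUnion (t := fun q => {p | I p q.1 ∧ I p q.2})
    fun q hq => ?_).subset fun p hp => ?_
  · obtain ⟨h₁, h₂, hne⟩ := mem_offDiag.1 hq
    exact (hA q.1 h₁ q.2 h₂ hne).finite
  obtain ⟨L₁, hL₁, L₂, hL₂, hne⟩ := one_lt_card.1 hp
  rw [mem_filter] at hL₁ hL₂
  exact Set.mem_biUnion (x := (L₁, L₂)) (mem_offDiag.2 ⟨hL₁.1, hL₂.1, hne⟩) ⟨hL₁.2, hL₂.2⟩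

theorem card_offDiag_eq_sum_card_offDiag_filter (T : Finset P)
    (hT : ∀ L₁ ∈ A, ∀ L₂ ∈ A, L₁ ≠ L₂ → ∃! p, p ∈ T ∧ I p L₁ ∧ I p L₂) :
    #A.offDiag = ∑ p ∈ T, #(A.filter (I p)).offDiag := by
  let r : P → L × L → Prop := fun p q => I p q.1 ∧ I p q.2
  have habove : ∀ p, A.offDiag.bipartiteAbove r p = (A.filter (I p)).offDiag := by
    intro p
    ext ⟨L₁, L₂⟩
    simp only [mem_bipartiteAbove, mem_offDiag, mem_filter, r]
    tauto
  have hbelow : ∀ q ∈ A.offDiag, #(T.bipartiteBelow r q) = 1 := by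
    rintro ⟨L₁, L₂⟩ hq
    obtain ⟨hL₁, hL₂, hne⟩ := mem_offDiag.1 hq
    obtain ⟨p, hp, huniq⟩ := hT L₁ hL₁ L₂ hL₂ hne
    refine card_eq_one.2 ⟨p, ext fun p' => ?_⟩
    rw [mem_bipartiteBelow, mem_singleton]
    exact ⟨huniq p', fun h => h ▸ hp⟩
  rw [← sum_congr rfl fun p _ => congrArg card (habove p),
    sum_card_bipartiteAbove_eq_sum_card_bipartiteBelow, sum_congr rfl hbelow, card_eq_sum_ones]

theorem sum_mul_pred_mul_ncard_eq
    (hA : ∀ L₁ ∈ A, ∀ L₂ ∈ A, L₁ ≠ L₂ → ∃! p, I p L₁ ∧ I p L₂) :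
    ∑ m ∈ Icc 2 #A, m * (m - 1) * {p | #(A.filter (I p)) = m}.ncard = #A * (#A - 1) := by
  set n : P → ℕ := fun p => #(A.filter (I p))
  have hfin := finite_setOf_two_le_card_filter I A fun L₁ h₁ L₂ h₂ hne _ hp _ hq =>
    (hA L₁ h₁ L₂ h₂ hne).unique hp hq
  set T := hfin.toFinset
  have hT : ∀ L₁ ∈ A, ∀ L₂ ∈ A, L₁ ≠ L₂ → ∃! p, p ∈ T ∧ I p L₁ ∧ I p L₂ := by
    intro L₁ h₁ L₂ h₂ hne
    obtain ⟨p, hp, huniq⟩ := hA L₁ h₁ L₂ h₂ hne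
    have hpT : p ∈ T := hfin.mem_toFinset.2 <|
      one_lt_card.2 ⟨L₁, mem_filter.2 ⟨h₁, hp.1⟩, L₂, mem_filter.2 ⟨h₂, hp.2⟩, hne⟩
    exact ⟨p, ⟨hpT, hp⟩, fun p' hp' => huniq p' hp'.2⟩
  have hncard : ∀ m ∈ Icc 2 #A, {p | n p = m}.ncard = #(T.filter (n · = m)) := by
    intro m hm
    rw [← Set.ncard_coe_finset, coe_filter]
    congr 1
    ext p
    simp only [Set.mem_ofPred_eq, T, hfin.mem_toFinset, n]
    exact ⟨fun h => ⟨h ▸ (mem_Icc.1 hm).1, h⟩, And.right⟩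
  have hmaps : ∀ p ∈ T, n p ∈ Icc 2 #A := fun p hp =>
    mem_Icc.2 ⟨hfin.mem_toFinset.1 hp, card_filter_le _ _⟩
  calc ∑ m ∈ Icc 2 #A, m * (m - 1) * {p | n p = m}.ncard
      = ∑ m ∈ Icc 2 #A, ∑ p ∈ T with n p = m, m * (m - 1) := by
        refine sum_congr rfl fun m hm => ?_
        rw [hncard m hm, sum_const, smul_eq_mul, mul_comm]
    _ = ∑ p ∈ T, n p * (n p - 1) := sum_fiberwise_of_maps_to' hmaps (fun m => m * (m - 1))
    _ = ∑ p ∈ T, #(A.filter (I p)).offDiag := by simp [offDiag_card, Nat.mul_sub_one, n]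
    _ = #A * (#A - 1) := by
        rw [← card_offDiag_eq_sum_card_offDiag_filter I A T hT, offDiag_card, Nat.mul_sub_one]

end DoubleCounting

section Arrangement

variable {k : Type*} [Field k]

theorem linesThrough_eq_card_filter [∀ p, DecidablePred (Incid (k := k) p)]
    (A : Finset (ProjPlane k)) (p : ProjPlane k) :
    linesThrough A p = #(A.filter (Incid p)) := by
  rw [linesThrough, ← Set.ncard_coe_finset, coe_filter]

theorem sum_mul_pred_mul_tm_eq (A : Finset (ProjPlane k)) :
    ∑ m ∈ Icc 2 #A, m * (m - 1) * tm A m = #A * (#A - 1) := by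
  classical
  simp only [tm, linesThrough_eq_card_filter]
  exact sum_mul_pred_mul_ncard_eq Incid A fun _ _ _ _ h => existsUnique_incid_of_ne h

end Arrangement

section ChernNumbers

-- The paper's `-m² + m(1 + d) + (2 - 2d)`, factored.
def chernWeight (d m : ℕ) : ℤ := ((m : ℤ) - 2) * ((d : ℤ) - 1 - m)

theorem chernWeight_nonneg {d m : ℕ} (h2 : 2 ≤ m) (hd : m < d) : 0 ≤ chernWeight d m :=
  mul_nonneg (by omega) (by omega)

theorem chernWeight_pos {d m : ℕ} (h3 : 3 ≤ m) (hd : m + 2 ≤ d) : 0 < chernWeight d m :=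
  mul_pos (by omega) (by omega)

theorem sub_two_mul_c1sq_sub_mul_c2_eq {k : Type*} [Field k] (A : Finset (ProjPlane k)) :
    ((#A : ℤ) - 2) * c1sq A - (2 * (#A : ℤ) - 6) * c2 A =
      ∑ m ∈ Icc 2 #A, chernWeight #A m * tm A m := by
  have hcast : ∀ n : ℕ, (n : ℤ) * ((n - 1 : ℕ) : ℤ) = n * (n - 1) := by
    rintro (_ | n) <;> simp
  have hcount : ∑ m ∈ Icc 2 #A, (m : ℤ) * (m - 1) * tm A m = #A * (#A - 1) := by
    have := congrArg (Nat.cast : ℕ → ℤ) (sum_mul_pred_mul_tm_eq A)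
    push_cast at this
    simpa only [hcast] using this
  have hsplit : ∑ m ∈ Icc 2 #A, chernWeight #A m * tm A m =
      ((#A : ℤ) - 2) * ∑ m ∈ Icc 2 #A, (3 * (m : ℤ) - 4) * tm A m
        - (2 * (#A : ℤ) - 6) * ∑ m ∈ Icc 2 #A, ((m : ℤ) - 1) * tm A m
        - ∑ m ∈ Icc 2 #A, (m : ℤ) * (m - 1) * tm A m := by
    rw [mul_sum, mul_sum, ← sum_sub_distrib, ← sum_sub_distrib]
    exact sum_congr rfl fun m _ => by rw [chernWeight]; ring
  rw [c1sq, c2, hsplit, hcount]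
  ring

variable {d : ℕ} {t : ℕ → ℕ}

theorem chernWeight_mul_nonneg (ht : t d = 0) {m : ℕ} (hm : m ∈ Icc 2 d) :
    0 ≤ chernWeight d m * t m := by
  obtain ⟨h2, hmd⟩ := mem_Icc.1 hm
  rcases hmd.eq_or_lt with rfl | hlt
  · simp [ht]
  · exact mul_nonneg (chernWeight_nonneg h2 hlt) (Int.natCast_nonneg _)

theorem sum_chernWeight_mul_nonneg (ht : t d = 0) :
    0 ≤ ∑ m ∈ Icc 2 d, chernWeight d m * t m :=
  sum_nonneg fun _ hm => chernWeight_mul_nonneg ht hm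

theorem sum_chernWeight_mul_eq_zero_iff (ht : t d = 0) (ht' : t (d - 1) = 0) :
    ∑ m ∈ Icc 2 d, chernWeight d m * t m = 0 ↔ ∀ m ∈ Icc 3 d, t m = 0 := by
  rw [sum_eq_zero_iff_of_nonneg fun _ hm => chernWeight_mul_nonneg ht hm]
  constructor
  · intro h m hm
    obtain ⟨h3, hmd⟩ := mem_Icc.1 hm
    by_cases hlt : m + 2 ≤ d
    · have := (mul_eq_zero.1 (h m (mem_Icc.2 ⟨by omega, hmd⟩))).resolve_left
        (chernWeight_pos h3 hlt).ne'
      exact_mod_cast this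
    · obtain rfl | rfl : m = d - 1 ∨ m = d := by omega
      exacts [ht', ht]
  · intro h m hm
    obtain ⟨h2, hmd⟩ := mem_Icc.1 hm
    rcases h2.eq_or_lt with rfl | h3
    · simp [chernWeight]
    · simp [h m (mem_Icc.2 ⟨h3, hmd⟩)]

theorem eq_mul_pred_div_two_iff (hd : 2 ≤ d)
    (hcount : ∑ m ∈ Icc 2 d, m * (m - 1) * t m = d * (d - 1)) :
    t 2 = d * (d - 1) / 2 ↔ ∀ m ∈ Icc 3 d, t m = 0 := by
  rw [← insert_Icc_add_one_left_eq_Icc hd, sum_insert (by simp)] at hcount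
  simp only [Nat.reduceAdd, Nat.reduceSub, Nat.reduceMul] at hcount
  have hzero : (∀ m ∈ Icc 3 d, t m = 0) ↔ ∑ m ∈ Icc 3 d, m * (m - 1) * t m = 0 := by
    rw [sum_eq_zero_iff]
    refine forall₂_congr fun m hm => ?_
    have := (mem_Icc.1 hm).1
    simp only [mul_eq_zero]
    omega
  obtain ⟨j, hj⟩ := Nat.even_mul_pred_self d
  rw [hzero]
  omega

end ChernNumbers

/-- For an arrangement of `d` lines with `t_d = t_{d-1} = 0`,
`(d-2) c̄₁² - (2d-6) c̄₂ ≥ 0`, with equality if and only if `t_2 = d(d-1)/2`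
(i.e. the arrangement has only nodes). -/
theorem stmt_9 {k : Type*} [Field k] (A : Finset (ProjPlane k))
    (hd : 2 ≤ A.card) (h1 : tm A A.card = 0) (h2 : tm A (A.card - 1) = 0) :
    0 ≤ ((A.card : ℤ) - 2) * c1sq A - (2 * (A.card : ℤ) - 6) * c2 A ∧
    (((A.card : ℤ) - 2) * c1sq A - (2 * (A.card : ℤ) - 6) * c2 A = 0 ↔
      tm A 2 = A.card * (A.card - 1) / 2) := by
  rw [sub_two_mul_c1sq_sub_mul_c2_eq,
    eq_mul_pred_div_two_iff hd (sum_mul_pred_mul_tm_eq A)]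
  exact ⟨sum_chernWeight_mul_nonneg h1, sum_chernWeight_mul_eq_zero_iff h1 h2⟩
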